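/- Second derivative at a stationary point: let F(λ) = ( −ln( ∑_h π(h)e^{−nλ L̂(h)} ) + ln(2√n/δ) )/( nλ(1−λ/2) ) on (0,2). At any λ ∈ (0,1) with F'(λ) = 0, one has F''(λ) = (1/(λ(1−λ/2)))·( E_{ρ_λ}[L̂]/(1−λ) − n·Var_{ρ_λ}[L̂] ); in particular F''(λ) > 0 whenever E_{ρ_λ}[L̂] > (1−λ)·n·Var_{ρ_λ}[L̂]. -/

import Mathlib

set_option maxHeartbeats 1000000


open Finset

/-- Gibbs posterior `ρ_λ(h) = π(h)·e^{−λn L̂(h)} / ∑_{h'} π(h')·e^{−λn L̂(h')}`. -/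
noncomputable def gibbs {H : Type*} [Fintype H] (π Lhat : H → ℝ) (n : ℕ) (lam : ℝ)
    (h : H) : ℝ :=
  π h * Real.exp (-lam * n * Lhat h) / ∑ h', π h' * Real.exp (-lam * n * Lhat h')

/-- Mean of `L̂` under the Gibbs posterior `ρ_λ`. -/
noncomputable def gibbsMean {H : Type*} [Fintype H] (π Lhat : H → ℝ) (n : ℕ)
    (lam : ℝ) : ℝ :=
  ∑ h, gibbs π Lhat n lam h * Lhat h

/-- Variance of `L̂` under the Gibbs posterior `ρ_λ`. -/
noncomputable def gibbsVar {H : Type*} [Fintype H] (π Lhat : H → ℝ) (n : ℕ)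
    (lam : ℝ) : ℝ :=
  (∑ h, gibbs π Lhat n lam h * Lhat h ^ 2) - gibbsMean π Lhat n lam ^ 2

/-- The bound along the Gibbs path:
`F(λ) = (−ln(∑_h π(h)e^{−nλL̂(h)}) + ln(2√n/δ))/(nλ(1−λ/2))`. -/
noncomputable def Fbound {H : Type*} [Fintype H] (π Lhat : H → ℝ) (n : ℕ) (δ : ℝ)
    (lam : ℝ) : ℝ :=
  (-Real.log (∑ h, π h * Real.exp (-(n : ℝ) * lam * Lhat h)) +
      Real.log (2 * Real.sqrt n / δ)) / ((n : ℝ) * lam * (1 - lam / 2))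

lemma algKey (nr lam z s1 s2 g u v : ℝ) (hnr : nr ≠ 0) (hz : z ≠ 0)
    (hlam : lam ≠ 0) (hu : u ≠ 0) (hv : v ≠ 0)
    (hN0 : nr * s1 / z * (nr * lam * v) - g * (nr * u) = 0) :
    (((nr * ((-nr) * s2) * z - nr * s1 * ((-nr) * s1)) / z ^ 2 * (nr * lam * v)
          + nr * s1 / z * (nr * u)
          - (nr * s1 / z * (nr * u) + g * (-nr)))
          * (nr * lam * v) ^ 2
        - (nr * s1 / z * (nr * lam * v) - g * (nr * u))
          * ((2 : ℝ) * (nr * lam * v) ^ 1 * (nr * u)))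
      / ((nr * lam * v) ^ 2) ^ 2 =
      (1 / (lam * v)) * ((s1 / z) / u - nr * (s2 / z - (s1 / z) ^ 2)) := by
  have hx : nr * (s1 / z * (nr * lam * v) - g * u) = 0 := by
    linear_combination hN0
  have hN1 : s1 / z * (nr * lam * v) - g * u = 0 :=
    (mul_eq_zero.mp hx).resolve_left hnr
  have hg : g = s1 / z * (nr * lam * v) / u := by
    field_simp at hN1 ⊢
    linear_combination -hN1
  rw [hN0, hg]
  field_simp
  ring


section Aux
variable {H : Type*} [Fintype H]

noncomputable def auxZ (π Lhat : H → ℝ) (n : ℕ) (l : ℝ) : ℝ :=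
  ∑ h, π h * Real.exp (-(n : ℝ) * l * Lhat h)

noncomputable def auxS1 (π Lhat : H → ℝ) (n : ℕ) (l : ℝ) : ℝ :=
  ∑ h, π h * Lhat h * Real.exp (-(n : ℝ) * l * Lhat h)

noncomputable def auxS2 (π Lhat : H → ℝ) (n : ℕ) (l : ℝ) : ℝ :=
  ∑ h, π h * Lhat h ^ 2 * Real.exp (-(n : ℝ) * l * Lhat h)

lemma auxZ_pos [Nonempty H] (π Lhat : H → ℝ) (hπ : ∀ h, 0 < π h) (n : ℕ) (l : ℝ) :
    0 < auxZ π Lhat n l :=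
  Finset.sum_pos (fun h _ => mul_pos (hπ h) (Real.exp_pos _)) Finset.univ_nonempty

lemma hasDerivAt_lin (n : ℕ) (c l : ℝ) :
    HasDerivAt (fun x : ℝ => -(n : ℝ) * x * c) (-(n : ℝ) * c) l := by
  simpa using ((hasDerivAt_id l).const_mul (-(n : ℝ))).mul_const c

lemma hasDerivAt_auxZ (π Lhat : H → ℝ) (n : ℕ) (l : ℝ) :
    HasDerivAt (auxZ π Lhat n) (-(n : ℝ) * auxS1 π Lhat n l) l := by
  have key : ∀ h : H, HasDerivAt (fun x : ℝ => π h * Real.exp (-(n : ℝ) * x * Lhat h))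
      (-(n : ℝ) * (π h * Lhat h * Real.exp (-(n : ℝ) * l * Lhat h))) l := by
    intro h
    have := ((hasDerivAt_lin n (Lhat h) l).exp).const_mul (π h)
    refine this.congr_deriv ?_
    ring
  unfold auxZ auxS1
  rw [Finset.mul_sum]
  exact HasDerivAt.fun_sum (fun h _ => key h)

lemma hasDerivAt_auxS1 (π Lhat : H → ℝ) (n : ℕ) (l : ℝ) :
    HasDerivAt (auxS1 π Lhat n) (-(n : ℝ) * auxS2 π Lhat n l) l := by
  have key : ∀ h : H, HasDerivAt (fun x : ℝ => π h * Lhat h * Real.exp (-(n : ℝ) * x * Lhat h))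
      (-(n : ℝ) * (π h * Lhat h ^ 2 * Real.exp (-(n : ℝ) * l * Lhat h))) l := by
    intro h
    have := ((hasDerivAt_lin n (Lhat h) l).exp).const_mul (π h * Lhat h)
    refine this.congr_deriv ?_
    ring
  unfold auxS1 auxS2
  rw [Finset.mul_sum]
  exact HasDerivAt.fun_sum (fun h _ => key h)

end Aux

/-- Second derivative of `F` at a stationary point `λ ∈ (0,1)`:
`F''(λ) = (1/(λ(1−λ/2)))·(E_{ρ_λ}[L̂]/(1−λ) − n·Var_{ρ_λ}[L̂])`,
which is positive whenever `E_{ρ_λ}[L̂] > (1−λ)·n·Var_{ρ_λ}[L̂]`. -/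
theorem second_derivative_at_stationary_point
    {H : Type*} [Fintype H] [Nonempty H]
    (π : H → ℝ) (hπpos : ∀ h, 0 < π h) (hπsum : ∑ h, π h = 1)
    (Lhat : H → ℝ) (hL : ∀ h, Lhat h ∈ Set.Icc (0 : ℝ) 1)
    (n : ℕ) (hn : 0 < n) (δ : ℝ) (hδ : δ ∈ Set.Ioo (0 : ℝ) 1)
    (lam : ℝ) (hlam : lam ∈ Set.Ioo (0 : ℝ) 1)
    (hstat : deriv (Fbound π Lhat n δ) lam = 0) :
    deriv (deriv (Fbound π Lhat n δ)) lam =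
        (1 / (lam * (1 - lam / 2))) *
          (gibbsMean π Lhat n lam / (1 - lam) - (n : ℝ) * gibbsVar π Lhat n lam) ∧
      ((1 - lam) * (n : ℝ) * gibbsVar π Lhat n lam < gibbsMean π Lhat n lam →
        0 < deriv (deriv (Fbound π Lhat n δ)) lam) := by
  obtain ⟨hl0, hl1⟩ := hlam
  have hn0 : (0 : ℝ) < n := Nat.cast_pos.mpr hn
  have hne : (n : ℝ) ≠ 0 := hn0.ne'
  have hl2 : lam < 2 := by linarith
  have hmem : lam ∈ Set.Ioo (0 : ℝ) 2 := ⟨hl0, hl2⟩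
  set C : ℝ := Real.log (2 * Real.sqrt n / δ) with hCdef
  have hZpos : ∀ l, 0 < auxZ π Lhat n l := fun l => auxZ_pos π Lhat hπpos n l
  have hZne : ∀ l, auxZ π Lhat n l ≠ 0 := fun l => (hZpos l).ne'
  -- derivative of D
  have hD : ∀ l : ℝ, HasDerivAt (fun x : ℝ => (n : ℝ) * x * (1 - x / 2))
      ((n : ℝ) * (1 - l)) l := by
    intro l
    have h1 : HasDerivAt (fun x : ℝ => (n : ℝ) * x) ((n : ℝ)) l := by
      simpa using (hasDerivAt_id l).const_mul (n : ℝ)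
    have h2 : HasDerivAt (fun x : ℝ => (1 : ℝ) - x / 2) (-(1 / 2)) l := by
      simpa using ((hasDerivAt_id l).div_const 2).const_sub 1
    have := h1.mul h2
    refine this.congr_deriv ?_
    ring
  have hDne : ∀ l ∈ Set.Ioo (0 : ℝ) 2, (n : ℝ) * l * (1 - l / 2) ≠ 0 := by
    intro l hl
    have : 0 < (n : ℝ) * l * (1 - l / 2) := by
      apply mul_pos (mul_pos hn0 hl.1); linarith [hl.2]
    exact this.ne'
  -- derivative of G
  have hG : ∀ l : ℝ, HasDerivAt (fun x : ℝ => -Real.log (auxZ π Lhat n x) + C)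
      ((n : ℝ) * auxS1 π Lhat n l / auxZ π Lhat n l) l := by
    intro l
    have := (((hasDerivAt_auxZ π Lhat n l).log (hZne l)).neg).add_const C
    refine this.congr_deriv ?_
    ring
  -- F = G / D and its derivative on (0,2)
  set F' : ℝ → ℝ := fun l =>
    ((n : ℝ) * auxS1 π Lhat n l / auxZ π Lhat n l * ((n : ℝ) * l * (1 - l / 2)) -
        (-Real.log (auxZ π Lhat n l) + C) * ((n : ℝ) * (1 - l))) /
      ((n : ℝ) * l * (1 - l / 2)) ^ 2 with hF'def
  have hFder : ∀ l ∈ Set.Ioo (0 : ℝ) 2, HasDerivAt (Fbound π Lhat n δ) (F' l) l := by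
    intro l hl
    have := (hG l).div (hD l) (hDne l hl)
    exact this
  have hderivF : ∀ l ∈ Set.Ioo (0 : ℝ) 2, deriv (Fbound π Lhat n δ) l = F' l :=
    fun l hl => (hFder l hl).deriv
  have hEv : deriv (Fbound π Lhat n δ) =ᶠ[nhds lam] F' := by
    filter_upwards [isOpen_Ioo.mem_nhds hmem] with x hx using hderivF x hx
  have hderiv2 : deriv (deriv (Fbound π Lhat n δ)) lam = deriv F' lam := hEv.deriv_eq
  -- derivative of F' at lam
  have hZd := hasDerivAt_auxZ π Lhat n lam
  have hS1d := hasDerivAt_auxS1 π Lhat n lam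
  have hA := (hS1d.const_mul (n : ℝ)).div hZd (hZne lam)
  have hE : HasDerivAt (fun l : ℝ => (n : ℝ) * (1 - l)) (-(n : ℝ)) lam := by
    simpa using ((hasDerivAt_id lam).const_sub 1).const_mul (n : ℝ)
  have hN := (hA.mul (hD lam)).sub ((hG lam).mul hE)
  have hDsq := (hD lam).pow 2
  have hF'at := hN.div hDsq (pow_ne_zero 2 (hDne lam hmem))
  have hd2 : deriv F' lam =
      ((((n : ℝ) * (-(n : ℝ) * auxS2 π Lhat n lam) * auxZ π Lhat n lam -
            (n : ℝ) * auxS1 π Lhat n lam * (-(n : ℝ) * auxS1 π Lhat n lam)) /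
              auxZ π Lhat n lam ^ 2 *
            ((n : ℝ) * lam * (1 - lam / 2)) +
          (n : ℝ) * auxS1 π Lhat n lam / auxZ π Lhat n lam * ((n : ℝ) * (1 - lam)) -
          ((n : ℝ) * auxS1 π Lhat n lam / auxZ π Lhat n lam * ((n : ℝ) * (1 - lam)) +
            (-Real.log (auxZ π Lhat n lam) + C) * -(n : ℝ))) *
          ((n : ℝ) * lam * (1 - lam / 2)) ^ 2 -
        ((n : ℝ) * auxS1 π Lhat n lam / auxZ π Lhat n lam * ((n : ℝ) * lam * (1 - lam / 2)) -
            (-Real.log (auxZ π Lhat n lam) + C) * ((n : ℝ) * (1 - lam))) *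
          ((2 : ℕ) * ((n : ℝ) * lam * (1 - lam / 2)) ^ 1 * ((n : ℝ) * (1 - lam)))) /
        (((n : ℝ) * lam * (1 - lam / 2)) ^ 2) ^ 2 := by
    rw [hF'def]
    exact hF'at.deriv
  -- mean and variance identities
  have hexp : ∀ x : ℝ, -lam * (n : ℝ) * x = -(n : ℝ) * lam * x := fun x => by ring
  have hmean : gibbsMean π Lhat n lam = auxS1 π Lhat n lam / auxZ π Lhat n lam := by
    unfold gibbsMean gibbs auxS1 auxZ
    simp only [hexp, div_mul_eq_mul_div]
    rw [← Finset.sum_div]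
    congr 1
    exact Finset.sum_congr rfl fun h _ => by ring
  have hsq : (∑ h, gibbs π Lhat n lam h * Lhat h ^ 2) =
      auxS2 π Lhat n lam / auxZ π Lhat n lam := by
    unfold gibbs auxS2 auxZ
    simp only [hexp, div_mul_eq_mul_div]
    rw [← Finset.sum_div]
    congr 1
    exact Finset.sum_congr rfl fun h _ => by ring
  have hvar : gibbsVar π Lhat n lam =
      auxS2 π Lhat n lam / auxZ π Lhat n lam -
        (auxS1 π Lhat n lam / auxZ π Lhat n lam) ^ 2 := by
    unfold gibbsVar
    rw [hsq, hmean]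
  -- stationarity: numerator vanishes
  have hF'0 : F' lam = 0 := by rw [← hderivF lam hmem]; exact hstat
  have hN0 : (n : ℝ) * auxS1 π Lhat n lam / auxZ π Lhat n lam *
        ((n : ℝ) * lam * (1 - lam / 2)) -
      (-Real.log (auxZ π Lhat n lam) + C) * ((n : ℝ) * (1 - lam)) = 0 := by
    simp only [hF'def] at hF'0
    exact (div_eq_zero_iff.mp hF'0).resolve_right (pow_ne_zero 2 (hDne lam hmem))
  -- main identity
  have key : deriv (deriv (Fbound π Lhat n δ)) lam =
      (1 / (lam * (1 - lam / 2))) *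
        (gibbsMean π Lhat n lam / (1 - lam) - (n : ℝ) * gibbsVar π Lhat n lam) := by
    rw [hderiv2, hd2, hmean, hvar]
    have := algKey (n : ℝ) lam (auxZ π Lhat n lam) (auxS1 π Lhat n lam)
      (auxS2 π Lhat n lam) (-Real.log (auxZ π Lhat n lam) + C) (1 - lam) (1 - lam / 2)
      hne (hZne lam) hl0.ne' (by linarith) (by linarith) hN0
    linear_combination this
  refine ⟨key, fun hlt => ?_⟩
  rw [key]
  have h2l : (0 : ℝ) < 1 - lam / 2 := by linarith
  have h1l : (0 : ℝ) < 1 - lam := by linarith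
  apply mul_pos (one_div_pos.mpr (mul_pos hl0 h2l))
  rw [sub_pos, lt_div_iff₀ h1l]
  nlinarith [hlt]
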